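/- arXiv:math/0306083 — 2 statements merged into one kernel-verified Lean document; each statement's English description precedes it below -/
import Mathlib

section
/- Assume (H) and let σ := lim_{n→∞} n^{−1/2}(E[S_n²])^{1/2}. If σ = 0, then the sequence of random variables (S_n)_{n≥1} is bounded in L²(Ω, ℝ). -/
open MeasureTheory ProbabilityTheory Filter Set
open scoped ENNReal NNReal Topology

noncomputable section

/-- Covariance of two real functions with respect to a measure. -/
def covar {Ω : Type*} [MeasurableSpace Ω] (ν : Measure Ω) (f g : Ω → ℝ) : ℝ :=
  (∫ ω, f ω * g ω ∂ν) - (∫ ω, f ω ∂ν) * (∫ ω, g ω ∂ν)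

/-- The strong decorrelation hypothesis (H) of Le Borgne–Pène, for the process `X` with
partial sums `S`, constants `C`, `M`, `r` and decorrelation coefficients `φ`. -/
def HypH {Ω : Type*} [MeasurableSpace Ω] (ν : Measure Ω)
    (X : ℕ → Ω → ℝ) (S : ℕ → Ω → ℝ) (C M r : ℝ) (φ : ℕ → ℕ → ℝ) : Prop :=
  1 ≤ C ∧ max 1 (eLpNorm (X 0) ⊤ ν).toReal ≤ M ∧ 0 ≤ r ∧
  (∀ p l, 0 ≤ φ p l ∧ φ p l ≤ 1) ∧
  (Summable fun p : ℕ => (p : ℝ) * ⨆ l : Fin (⌊(p : ℝ) / (r + 1)⌋₊ + 1), φ p (l : ℕ)) ∧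
  ∀ a b c : ℕ, a + b + c ≤ 3 →
  ∀ j k l p q s : ℕ, 1 ≤ j → j ≤ k → k ≤ l → p ≤ q → q ≤ s →
  ∀ F : ℝ × ℝ × ℝ × ℝ → ℝ, Differentiable ℝ F →
    Integrable (fun ω => F (S (j - 1) ω, X j ω, X k ω, X l ω)) ν →
    |covar ν (fun ω => F (S (j - 1) ω, X j ω, X k ω, X l ω))
        (fun ω => X (l + p) ω ^ a * X (l + q) ω ^ b * X (l + s) ω ^ c)| ≤
      C * ((∫ ω, |F (S (j - 1) ω, X j ω, X k ω, X l ω)| ∂ν)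
        + ∫ ω, ⨆ u ∈ Icc (-M) M, ⨆ v ∈ Icc (-M) M, ⨆ w ∈ Icc (-M) M, ⨆ x ∈ Icc (-M) M,
            ‖fderiv ℝ F (S (j - 1) ω + u, X j ω + v, X k ω + w, X l ω + x)‖ ∂ν)
        * φ p (s - p)

/-- Property `(P_n(A))`: Berry–Esseen type bound with constant `A` for the
normalized partial sums `S_k / √k`, `k = 1, …, n-1`. -/
def PropP {Ω : Type*} [MeasurableSpace Ω] (ν : Measure Ω)
    (S : ℕ → Ω → ℝ) (n : ℕ) (A : ℝ) : Prop :=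
  ∀ k : ℕ, 1 ≤ k → k ≤ n - 1 → ∀ x : ℝ,
    |(ν {ω | S k ω / Real.sqrt k ≤ x}).toReal
        - ((gaussianReal 0 1) (Iic x)).toReal| ≤ A / Real.sqrt k


/-!
Write `a n = E[S_n²]` and let `c` be the autocovariance of `X`. By stationarity
`a n = ∑_{j,k<n} c |j - k|`, and (H) applied to the coordinate projection `F(s, x, y, z) = x`
gives `|c p| ≤ C (M + 1) φ(p, 0)`, so `B = ∑ p |c p|` is finite. Splitting `[0, 2n)` into two
halves, the diagonal blocks each contribute `a n` and the off-diagonal blocks at most `B` in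
absolute value, whence `a (2n) ≥ 2 a n - 2B`. Thus `(a (2^k n) - 2B) / 2^k` is nondecreasing
in `k`, while `σ = 0` means `a m / m → 0`; so `a n ≤ 2B`.
-/

lemma Real.iSup₂_le {ι : Sort*} {κ : ι → Sort*} {f : ∀ i, κ i → ℝ} {a : ℝ}
    (h : ∀ i j, f i j ≤ a) (ha : 0 ≤ a) : ⨆ (i) (j), f i j ≤ a :=
  Real.iSup_le (fun i => Real.iSup_le (h i) ha) ha

lemma sum_Icc_one_eq_sum_range {M : Type*} [AddCommMonoid M] (f : ℕ → M) (n : ℕ) :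
    ∑ k ∈ Finset.Icc 1 n, f k = ∑ k ∈ Finset.range n, f (1 + k) := by
  rw [← Finset.Ico_add_one_right_eq_Icc, Finset.sum_Ico_eq_sum_range, Nat.add_sub_cancel]

def toeplitzSum (c : ℕ → ℝ) (n : ℕ) : ℝ :=
  ∑ j ∈ Finset.range n, ∑ k ∈ Finset.range n, c (Nat.dist j k)

lemma toeplitzSum_add_self (c : ℕ → ℝ) (n : ℕ) :
    toeplitzSum c (n + n) =
      2 * toeplitzSum c n + 2 * ∑ j ∈ Finset.range n, ∑ k ∈ Finset.range n, c (j + k + 1) := by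
  have hcross : ∑ j ∈ Finset.range n, ∑ k ∈ Finset.range n, c (Nat.dist j (n + k)) =
      ∑ j ∈ Finset.range n, ∑ k ∈ Finset.range n, c (j + k + 1) := by
    rw [← Finset.sum_range_reflect]
    refine Finset.sum_congr rfl fun j hj => Finset.sum_congr rfl fun k _ => ?_
    rw [Finset.mem_range] at hj
    congr 1
    simp only [Nat.dist]
    omega
  have hswap : ∑ j ∈ Finset.range n, ∑ k ∈ Finset.range n, c (Nat.dist (n + j) k) =
      ∑ j ∈ Finset.range n, ∑ k ∈ Finset.range n, c (Nat.dist j (n + k)) := by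
    rw [Finset.sum_comm]
    simp only [Nat.dist_comm]
  simp only [toeplitzSum, Finset.sum_range_add, Finset.sum_add_distrib, Nat.dist_add_add_left,
    hswap, hcross]
  ring

lemma abs_sum_range_sum_range_add_le (g : ℕ → ℝ) (n : ℕ) :
    |∑ j ∈ Finset.range n, ∑ k ∈ Finset.range n, g (j + k)| ≤
      ∑ p ∈ Finset.range (n + n), (p + 1) * |g p| := by
  rw [← Finset.sum_product' (f := fun j k => g (j + k))]
  calc |∑ x ∈ Finset.range n ×ˢ Finset.range n, g (x.1 + x.2)|
      ≤ ∑ x ∈ Finset.range n ×ˢ Finset.range n, |g (x.1 + x.2)| := Finset.abs_sum_le_sum_abs _ _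
    _ = ∑ p ∈ Finset.range (n + n),
          ∑ x ∈ Finset.range n ×ˢ Finset.range n with x.1 + x.2 = p, |g (x.1 + x.2)| := by
      refine (Finset.sum_fiberwise_of_maps_to (fun x hx => ?_) _).symm
      simp only [Finset.mem_product, Finset.mem_range] at hx ⊢
      omega
    _ ≤ ∑ p ∈ Finset.range (n + n), (p + 1) * |g p| := by
      refine Finset.sum_le_sum fun p _ => ?_
      have hfiber : (Finset.range n ×ˢ Finset.range n).filter (fun x => x.1 + x.2 = p) ⊆
          Finset.HasAntidiagonal.antidiagonal p := fun x hx => by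
        simpa using (Finset.mem_filter.mp hx).2
      calc ∑ x ∈ Finset.range n ×ˢ Finset.range n with x.1 + x.2 = p, |g (x.1 + x.2)|
          = ((Finset.range n ×ˢ Finset.range n).filter (fun x => x.1 + x.2 = p)).card * |g p| := by
            rw [Finset.sum_congr rfl fun x hx => by rw [(Finset.mem_filter.mp hx).2],
              Finset.sum_const, nsmul_eq_mul]
        _ ≤ (p + 1) * |g p| := by
            gcongr
            exact_mod_cast (Finset.card_le_card hfiber).trans (Finset.Nat.card_antidiagonal p).le

lemma two_mul_toeplitzSum_sub_le (c : ℕ → ℝ)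
    (hc : Summable fun p : ℕ => ((p : ℝ) + 1) * |c (p + 1)|) (n : ℕ) :
    2 * toeplitzSum c n - 2 * ∑' p : ℕ, ((p : ℝ) + 1) * |c (p + 1)| ≤ toeplitzSum c (n + n) := by
  have hcross := abs_sum_range_sum_range_add_le (fun p => c (p + 1)) n
  have htail := hc.sum_le_tsum (Finset.range (n + n)) fun p _ => by positivity
  rw [toeplitzSum_add_self]
  linarith [(abs_le.mp hcross).1]

lemma le_of_two_mul_sub_le_add_self {a : ℕ → ℝ} {D : ℝ} (hdouble : ∀ n, 2 * a n - D ≤ a (n + n))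
    (hlim : Tendsto (fun m : ℕ => a m / m) atTop (𝓝 0)) {n : ℕ} (hn : 1 ≤ n) : a n ≤ D := by
  have hn' : (0 : ℝ) < n := by exact_mod_cast hn
  set b : ℕ → ℝ := fun k => (a (2 ^ k * n) - D) / 2 ^ k
  have hb : Monotone b := monotone_nat_of_le_succ fun k => by
    have h := hdouble (2 ^ k * n)
    rw [show 2 ^ k * n + 2 ^ k * n = 2 ^ (k + 1) * n by ring] at h
    simp only [b]
    rw [pow_succ (2 : ℝ), div_le_div_iff₀ (by positivity) (by positivity)]
    nlinarith [pow_pos (two_pos : (0 : ℝ) < 2) k]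
  have hm : Tendsto (fun k : ℕ => 2 ^ k * n) atTop atTop :=
    tendsto_atTop_mono (fun k => (Nat.lt_two_pow_self).le.trans (Nat.le_mul_of_pos_right _ hn))
      tendsto_id
  have hbn : Tendsto (fun k => b k / n) atTop (𝓝 0) := by
    have h := (hlim.comp hm).sub ((tendsto_const_div_atTop_nhds_zero_nat D).comp hm)
    rw [sub_zero] at h
    refine h.congr fun k => ?_
    simp only [Function.comp_apply, b]
    push_cast
    field_simp
  have h0 : b 0 / n ≤ 0 := ge_of_tendsto' hbn fun k => by gcongr; exact hb (Nat.zero_le k)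
  simp only [b, pow_zero, one_mul, div_one] at h0
  linarith [(div_le_iff₀ hn').mp h0]

def IsStationarySeq {Ω : Type*} [MeasurableSpace Ω] (ν : Measure Ω) (X : ℕ → Ω → ℝ) : Prop :=
  ∀ i m : ℕ, Measure.map (fun ω => fun t : Fin m => X (i + t) ω) ν
    = Measure.map (fun ω => fun t : Fin m => X (t : ℕ) ω) ν

def autocovariance {Ω : Type*} [MeasurableSpace Ω] (ν : Measure Ω) (X : ℕ → Ω → ℝ) (p : ℕ) : ℝ :=
  ∫ ω, X 0 ω * X p ω ∂ν

section Stationary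

variable {Ω : Type*} [MeasurableSpace Ω] {ν : Measure Ω} {X : ℕ → Ω → ℝ} {M : ℝ}

lemma IsStationarySeq.integral_mul_add (hX : IsStationarySeq ν X) (hmeas : ∀ k, Measurable (X k))
    (i s t : ℕ) : ∫ ω, X (i + s) ω * X (i + t) ω ∂ν = ∫ ω, X s ω * X t ω ∂ν := by
  let g : (Fin (s + t + 1) → ℝ) → ℝ := fun v => v ⟨s, by omega⟩ * v ⟨t, by omega⟩
  have hg : Measurable g := (measurable_pi_apply _).mul (measurable_pi_apply _)
  have key := congrArg (fun μ => ∫ v, g v ∂μ) (hX i (s + t + 1))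
  rwa [integral_map (measurable_pi_lambda _ fun _ => hmeas _).aemeasurable
      hg.aestronglyMeasurable,
    integral_map (measurable_pi_lambda _ fun _ => hmeas _).aemeasurable
      hg.aestronglyMeasurable] at key

lemma IsStationarySeq.integral_mul_eq_autocovariance (hX : IsStationarySeq ν X)
    (hmeas : ∀ k, Measurable (X k)) (j k : ℕ) :
    ∫ ω, X j ω * X k ω ∂ν = autocovariance ν X (Nat.dist j k) := by
  wlog hjk : j ≤ k generalizing j k
  · simp only [mul_comm (X j _), this k j (by omega), Nat.dist_comm]
  obtain ⟨d, rfl⟩ := Nat.exists_eq_add_of_le hjk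
  simpa [autocovariance, Nat.dist] using hX.integral_mul_add hmeas j 0 d

variable [IsFiniteMeasure ν]

lemma integrable_mul_of_ae_abs_le (hmeas : ∀ k, Measurable (X k))
    (hbdd : ∀ k, ∀ᵐ ω ∂ν, |X k ω| ≤ M) (j k : ℕ) : Integrable (fun ω => X j ω * X k ω) ν :=
  (Integrable.of_bound (hmeas k).aestronglyMeasurable M (hbdd k)).bdd_mul
    (hmeas j).aestronglyMeasurable (hbdd j)

lemma IsStationarySeq.integral_sq_sum_eq_toeplitzSum (hX : IsStationarySeq ν X)
    (hmeas : ∀ k, Measurable (X k)) (hbdd : ∀ k, ∀ᵐ ω ∂ν, |X k ω| ≤ M) (n : ℕ) :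
    ∫ ω, (∑ k ∈ Finset.Icc 1 n, X k ω) ^ 2 ∂ν = toeplitzSum (autocovariance ν X) n := by
  have hint := integrable_mul_of_ae_abs_le hmeas hbdd
  simp only [sum_Icc_one_eq_sum_range, sq, Finset.sum_mul_sum]
  rw [integral_finsetSum _ fun j _ => integrable_finsetSum _ fun k _ => hint _ _]
  refine Finset.sum_congr rfl fun j _ => ?_
  rw [integral_finsetSum _ fun k _ => hint _ _]
  refine Finset.sum_congr rfl fun k _ => ?_
  rw [hX.integral_mul_eq_autocovariance hmeas, Nat.dist_add_add_left]

end Stationary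

section Decorrelation

variable {Ω : Type*} [MeasurableSpace Ω] {ν : Measure Ω} {X S : ℕ → Ω → ℝ} {C M r : ℝ}
  {φ : ℕ → ℕ → ℝ}

lemma HypH.summable_mul_apply_zero (hH : HypH ν X S C M r φ) :
    Summable fun p : ℕ => (p : ℝ) * φ p 0 := by
  obtain ⟨-, -, -, hφ, hsum, -⟩ := hH
  refine hsum.of_nonneg_of_le (fun p => mul_nonneg p.cast_nonneg (hφ p 0).1) fun p => ?_
  exact mul_le_mul_of_nonneg_left
    (le_ciSup (f := fun l : Fin (⌊(p : ℝ) / (r + 1)⌋₊ + 1) => φ p l) (Set.finite_range _).bddAbove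
      ⟨0, Nat.succ_pos _⟩) p.cast_nonneg

variable [IsProbabilityMeasure ν]

lemma HypH.abs_autocovariance_le (hH : HypH ν X S C M r φ) (hX : IsStationarySeq ν X)
    (hmeas : ∀ k, Measurable (X k)) (hcent : ∀ k, ∫ ω, X k ω ∂ν = 0)
    (hbdd : ∀ k, ∀ᵐ ω ∂ν, |X k ω| ≤ M) (p : ℕ) :
    |autocovariance ν X p| ≤ C * (M + 1) * φ p 0 := by
  obtain ⟨hC, hMle, -, hφ, -, hcov⟩ := hH
  have hM : 1 ≤ M := (le_max_left _ _).trans hMle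
  let L : ℝ × ℝ × ℝ × ℝ →L[ℝ] ℝ :=
    (ContinuousLinearMap.fst ℝ ℝ (ℝ × ℝ)).comp (ContinuousLinearMap.snd ℝ ℝ (ℝ × ℝ × ℝ))
  have hL : ‖L‖ ≤ 1 := L.opNorm_le_bound zero_le_one fun x => by
    rw [one_mul]
    exact (norm_fst_le x.2).trans (norm_snd_le x)
  have hX1 : Integrable (X 1) ν := Integrable.of_bound (hmeas 1).aestronglyMeasurable M (hbdd 1)
  have h := hcov 1 0 0 (by norm_num) 1 1 1 p p p le_rfl le_rfl le_rfl le_rfl le_rfl L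
    L.differentiable hX1
  have hcov_eq : covar ν (fun ω => L (S (1 - 1) ω, X 1 ω, X 1 ω, X 1 ω))
      (fun ω => X (1 + p) ω ^ 1 * X (1 + p) ω ^ 0 * X (1 + p) ω ^ 0) = autocovariance ν X p := by
    simpa [covar, L, hcent, autocovariance] using hX.integral_mul_add hmeas 1 0 p
  have hF : ∫ ω, |L (S (1 - 1) ω, X 1 ω, X 1 ω, X 1 ω)| ∂ν ≤ M := by
    simpa [L] using integral_mono_of_nonneg (.of_forall fun ω => abs_nonneg (X 1 ω))
      (integrable_const M) (hbdd 1)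
  have hDF : ∫ ω, ⨆ u ∈ Icc (-M) M, ⨆ v ∈ Icc (-M) M, ⨆ w ∈ Icc (-M) M, ⨆ x ∈ Icc (-M) M,
      ‖fderiv ℝ L (S (1 - 1) ω + u, X 1 ω + v, X 1 ω + w, X 1 ω + x)‖ ∂ν ≤ 1 := by
    simp only [ContinuousLinearMap.fderiv, integral_const, probReal_univ, one_smul]
    exact Real.iSup₂_le (fun _ _ => Real.iSup₂_le (fun _ _ => Real.iSup₂_le
      (fun _ _ => Real.iSup₂_le (fun _ _ => hL) zero_le_one) zero_le_one) zero_le_one) zero_le_one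
  rw [hcov_eq, Nat.sub_self p] at h
  calc |autocovariance ν X p| ≤ _ := h
    _ ≤ C * (M + 1) * φ p 0 :=
      mul_le_mul_of_nonneg_right (mul_le_mul_of_nonneg_left (add_le_add hF hDF) (by linarith))
        (hφ p 0).1

lemma HypH.summable_autocovariance (hH : HypH ν X S C M r φ) (hX : IsStationarySeq ν X)
    (hmeas : ∀ k, Measurable (X k)) (hcent : ∀ k, ∫ ω, X k ω ∂ν = 0)
    (hbdd : ∀ k, ∀ᵐ ω ∂ν, |X k ω| ≤ M) :
    Summable fun p : ℕ => ((p : ℝ) + 1) * |autocovariance ν X (p + 1)| := by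
  have hsum := ((summable_nat_add_iff 1).mpr hH.summable_mul_apply_zero).mul_left (C * (M + 1))
  refine hsum.of_nonneg_of_le (fun p => by positivity) fun p => ?_
  calc ((p : ℝ) + 1) * |autocovariance ν X (p + 1)|
      ≤ ((p : ℝ) + 1) * (C * (M + 1) * φ (p + 1) 0) := by
        gcongr
        exact hH.abs_autocovariance_le hX hmeas hcent hbdd _
    _ = C * (M + 1) * (((p + 1 : ℕ) : ℝ) * φ (p + 1) 0) := by push_cast; ring

end Decorrelation

theorem stmt_3
    {Ω : Type*} [MeasurableSpace Ω] (ν : Measure Ω) [IsProbabilityMeasure ν]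
    (X : ℕ → Ω → ℝ) (S : ℕ → Ω → ℝ) (C M r : ℝ) (φ : ℕ → ℕ → ℝ)
    (hmeas : ∀ k, Measurable (X k))
    (hcent : ∀ k, ∫ ω, X k ω ∂ν = 0)
    (hbdd : ∀ k, ∀ᵐ ω ∂ν, |X k ω| ≤ M)
    (hstat : ∀ i m : ℕ,
      Measure.map (fun ω => fun t : Fin m => X (i + t) ω) ν
        = Measure.map (fun ω => fun t : Fin m => X (t : ℕ) ω) ν)
    (hS : ∀ n ω, S n ω = ∑ k ∈ Finset.Icc 1 n, X k ω)
    (hH : HypH ν X S C M r φ)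
    (σ : ℝ)
    (hσ : Tendsto (fun n : ℕ => Real.sqrt (∫ ω, S n ω ^ 2 ∂ν) / Real.sqrt n) atTop (𝓝 σ))
    (hσ0 : σ = 0) :
    ∃ R : ℝ, ∀ n : ℕ, 1 ≤ n → ∫ ω, S n ω ^ 2 ∂ν ≤ R := by
  have ha : ∀ n, ∫ ω, S n ω ^ 2 ∂ν = toeplitzSum (autocovariance ν X) n := fun n => by
    simp only [hS]
    exact IsStationarySeq.integral_sq_sum_eq_toeplitzSum hstat hmeas hbdd n
  have hlim : Tendsto (fun m : ℕ => toeplitzSum (autocovariance ν X) m / m) atTop (𝓝 0) := by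
    have h := hσ.pow 2
    rw [hσ0, zero_pow two_ne_zero] at h
    refine h.congr fun m => ?_
    rw [div_pow, Real.sq_sqrt (integral_nonneg fun ω => sq_nonneg _),
      Real.sq_sqrt m.cast_nonneg, ha]
  refine ⟨2 * ∑' p : ℕ, ((p : ℝ) + 1) * |autocovariance ν X (p + 1)|, fun n hn => ?_⟩
  rw [ha]
  exact le_of_two_mul_sub_le_add_self (two_mul_toeplitzSum_sub_le _
    (hH.summable_autocovariance hstat hmeas hcent hbdd)) hlim hn

end
end

section
/- Let (ζ_p)_{p≥1} be nonnegative reals with ∑_{p≥1} p ζ_p < ∞ and let ε ≥ 1 and n ≥ 1. Then ∑_{l=0}^{⌊n/3⌋} (1 + ∑_{p=1}^{⌊√l⌋} p ζ_p)/(l+ε²)^{3/2} ≤ ∑_{l≥0} 1/(l+ε²)^{3/2} + ∑_{p=1}^{⌊√n⌋} (2/√(p²+ε²−1)) p ζ_p. -/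
open Filter

lemma aux_pointwise (x : ℝ) (hx : 1 ≤ x) :
    1 / (x + 1) ^ ((3:ℝ)/2) ≤ 2 / Real.sqrt x - 2 / Real.sqrt (x + 1) := by
  set a := Real.sqrt x with ha
  set b := Real.sqrt (x+1) with hb
  have ha1 : 1 ≤ a := Real.one_le_sqrt.mpr hx
  have hb1 : a ≤ b := Real.sqrt_le_sqrt (by linarith)
  have ha2 : a ^ 2 = x := Real.sq_sqrt (by linarith)
  have hb2 : b ^ 2 = x + 1 := Real.sq_sqrt (by linarith)
  have hpow : (x + 1) ^ ((3:ℝ)/2) = b ^ 3 := by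
    rw [show (3:ℝ)/2 = (1/2)*3 by ring, Real.rpow_mul (by linarith),
      ← Real.sqrt_eq_rpow, show (3:ℝ) = ((3:ℕ):ℝ) by norm_num, Real.rpow_natCast]
  rw [hpow, div_sub_div _ _ (by positivity) (by positivity),
    div_le_div_iff₀ (by positivity) (by positivity)]
  nlinarith [sq_nonneg (a - b), sq_nonneg b]

lemma aux_tail (c : ℝ) (hc : 1 ≤ c) (m M : ℕ) (hm : 1 ≤ m) :
    ∑ l ∈ Finset.Ico m M, 1 / (((l:ℝ) + c) ^ ((3:ℝ)/2))
      ≤ 2 / Real.sqrt ((m:ℝ) - 1 + c) := by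
  set h : ℕ → ℝ := fun l => 2 / Real.sqrt ((l:ℝ) - 1 + c) with hh
  have step : ∀ l ∈ Finset.Ico m M, 1 / (((l:ℝ) + c) ^ ((3:ℝ)/2)) ≤ h l - h (l+1) := by
    intro l hl
    have hl1 : 1 ≤ l := le_trans hm (Finset.mem_Ico.mp hl).1
    have hx : 1 ≤ (l:ℝ) - 1 + c := by
      have : (1:ℝ) ≤ (l:ℝ) := by exact_mod_cast hl1
      linarith
    have := aux_pointwise ((l:ℝ) - 1 + c) hx
    simp only [hh]
    push_cast
    convert this using 3 <;> ring
  calc ∑ l ∈ Finset.Ico m M, 1 / (((l:ℝ) + c) ^ ((3:ℝ)/2))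
      ≤ ∑ l ∈ Finset.Ico m M, (h l - h (l+1)) := Finset.sum_le_sum step
    _ ≤ 2 / Real.sqrt ((m:ℝ) - 1 + c) := by
        rw [Finset.sum_Ico_eq_sum_range]
        have := Finset.sum_range_sub' (fun i => h (m + i)) (M - m)
        simp only [show ∀ i, m + i + 1 = m + (i+1) from fun i => by ring] at *
        rw [this]
        simp only [hh, add_zero]
        linarith [show (0:ℝ) ≤ h (m + (M - m)) from by positivity]

lemma aux_summable (c : ℝ) (hc : 1 ≤ c) :
    Summable (fun l : ℕ => 1 / (((l:ℝ) + c) ^ ((3:ℝ)/2))) := by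
  have h1 : Summable (fun l : ℕ => 1 / ((l:ℝ) ^ ((3:ℝ)/2))) :=
    Real.summable_one_div_nat_rpow.mpr (by norm_num)
  have h2 : Summable (fun l : ℕ => 1 / (((l+1:ℕ):ℝ) ^ ((3:ℝ)/2))) :=
    (summable_nat_add_iff 1).mpr h1
  refine h2.of_nonneg_of_le (fun l => by positivity) fun l => ?_
  have hb : ((l+1:ℕ):ℝ) ^ ((3:ℝ)/2) ≤ ((l:ℝ) + c) ^ ((3:ℝ)/2) := by
    apply Real.rpow_le_rpow (by positivity) _ (by norm_num)
    push_cast; linarith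
  apply one_div_le_one_div_of_le (by positivity) hb

theorem stmt_16 (ζ : ℕ → ℝ) (hζ : ∀ p, 0 ≤ ζ p)
    (hsum : Summable fun p : ℕ => (p : ℝ) * ζ p)
    (ε : ℝ) (hε : 1 ≤ ε) (n : ℕ) (hn : 1 ≤ n) :
    ∑ l ∈ Finset.range (n / 3 + 1),
        (1 + ∑ p ∈ Finset.Icc 1 ⌊Real.sqrt l⌋₊, (p : ℝ) * ζ p)
          / (((l : ℝ) + ε ^ 2) ^ ((3 : ℝ) / 2))
      ≤ (∑' l : ℕ, 1 / (((l : ℝ) + ε ^ 2) ^ ((3 : ℝ) / 2)))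
        + ∑ p ∈ Finset.Icc 1 ⌊Real.sqrt n⌋₊,
            (2 / Real.sqrt ((p : ℝ) ^ 2 + ε ^ 2 - 1)) * ((p : ℝ) * ζ p) := by
  have hc : 1 ≤ ε ^ 2 := by nlinarith
  set c := ε ^ 2 with hcdef
  set M := n / 3 + 1 with hM
  set K := Nat.sqrt n with hK
  have hfloor : ∀ m : ℕ, ⌊Real.sqrt m⌋₊ = Nat.sqrt m := fun m =>
    Real.nat_floor_real_sqrt_eq_nat_sqrt
  simp only [hfloor]
  -- split each term
  have hsplit : ∀ l ∈ Finset.range M,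
      (1 + ∑ p ∈ Finset.Icc 1 (Nat.sqrt l), (p : ℝ) * ζ p) / (((l : ℝ) + c) ^ ((3 : ℝ) / 2))
      = 1 / (((l : ℝ) + c) ^ ((3 : ℝ) / 2))
        + ∑ p ∈ Finset.Icc 1 (Nat.sqrt l), ((p : ℝ) * ζ p) / (((l : ℝ) + c) ^ ((3 : ℝ) / 2)) := by
    intro l _
    rw [add_div, Finset.sum_div]
  rw [Finset.sum_congr rfl hsplit, Finset.sum_add_distrib]
  have h1 : ∑ l ∈ Finset.range M, 1 / (((l : ℝ) + c) ^ ((3 : ℝ) / 2))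
      ≤ ∑' l : ℕ, 1 / (((l : ℝ) + c) ^ ((3 : ℝ) / 2)) :=
    Summable.sum_le_tsum _ (fun l _ => by positivity) (aux_summable c hc)
  have h2 : ∑ l ∈ Finset.range M,
      ∑ p ∈ Finset.Icc 1 (Nat.sqrt l), ((p : ℝ) * ζ p) / (((l : ℝ) + c) ^ ((3 : ℝ) / 2))
      ≤ ∑ p ∈ Finset.Icc 1 K,
          (2 / Real.sqrt ((p : ℝ) ^ 2 + c - 1)) * ((p : ℝ) * ζ p) := by
    have hfil : ∀ l ∈ Finset.range M,
        Finset.Icc 1 (Nat.sqrt l) = (Finset.Icc 1 K).filter (fun p => p * p ≤ l) := by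
      intro l hl
      have hln : l ≤ n := by
        have := Finset.mem_range.mp hl
        omega
      ext p
      simp only [Finset.mem_filter, Finset.mem_Icc, hK]
      constructor
      · rintro ⟨h1p, h2p⟩
        exact ⟨⟨h1p, le_trans h2p (Nat.sqrt_le_sqrt hln)⟩, (by nlinarith [Nat.le_sqrt'.mp h2p] : p * p ≤ l)⟩
      · rintro ⟨⟨h1p, _⟩, h3p⟩
        exact ⟨h1p, Nat.le_sqrt'.mpr (by nlinarith)⟩
    calc ∑ l ∈ Finset.range M,
        ∑ p ∈ Finset.Icc 1 (Nat.sqrt l), ((p : ℝ) * ζ p) / (((l : ℝ) + c) ^ ((3 : ℝ) / 2))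
        = ∑ l ∈ Finset.range M, ∑ p ∈ Finset.Icc 1 K,
            if p * p ≤ l then ((p : ℝ) * ζ p) / (((l : ℝ) + c) ^ ((3 : ℝ) / 2)) else 0 := by
          refine Finset.sum_congr rfl fun l hl => ?_
          rw [hfil l hl, Finset.sum_filter]
      _ = ∑ p ∈ Finset.Icc 1 K, ∑ l ∈ Finset.range M,
            if p * p ≤ l then ((p : ℝ) * ζ p) / (((l : ℝ) + c) ^ ((3 : ℝ) / 2)) else 0 :=
          Finset.sum_comm
      _ ≤ ∑ p ∈ Finset.Icc 1 K,
            (2 / Real.sqrt ((p : ℝ) ^ 2 + c - 1)) * ((p : ℝ) * ζ p) := by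
          refine Finset.sum_le_sum fun p hp => ?_
          have hp1 : 1 ≤ p := (Finset.mem_Icc.mp hp).1
          have hnn : 0 ≤ (p : ℝ) * ζ p := mul_nonneg (Nat.cast_nonneg p) (hζ p)
          have heq : ∑ l ∈ Finset.range M,
              (if p * p ≤ l then ((p : ℝ) * ζ p) / (((l : ℝ) + c) ^ ((3 : ℝ) / 2)) else 0)
              = ∑ l ∈ Finset.Ico (p * p) M,
                  ((p : ℝ) * ζ p) / (((l : ℝ) + c) ^ ((3 : ℝ) / 2)) := by
            rw [← Finset.sum_filter]
            apply Finset.sum_congr _ fun _ _ => rfl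
            ext l
            simp only [Finset.mem_filter, Finset.mem_range, Finset.mem_Ico]
            omega
          rw [heq]
          have hbd : ∑ l ∈ Finset.Ico (p * p) M, 1 / (((l : ℝ) + c) ^ ((3 : ℝ) / 2))
              ≤ 2 / Real.sqrt (((p * p : ℕ) : ℝ) - 1 + c) :=
            aux_tail c hc (p * p) M (Nat.one_le_iff_ne_zero.mpr (by positivity))
          have hrw : Real.sqrt (((p * p : ℕ) : ℝ) - 1 + c) = Real.sqrt ((p : ℝ) ^ 2 + c - 1) := by
            congr 1; push_cast; ring
          calc ∑ l ∈ Finset.Ico (p * p) M,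
              ((p : ℝ) * ζ p) / (((l : ℝ) + c) ^ ((3 : ℝ) / 2))
              = ((p : ℝ) * ζ p) * ∑ l ∈ Finset.Ico (p * p) M,
                  1 / (((l : ℝ) + c) ^ ((3 : ℝ) / 2)) := by
                rw [Finset.mul_sum]
                exact Finset.sum_congr rfl fun l _ => by ring
            _ ≤ ((p : ℝ) * ζ p) * (2 / Real.sqrt ((p : ℝ) ^ 2 + c - 1)) := by
                rw [← hrw]
                exact mul_le_mul_of_nonneg_left hbd hnn
            _ = (2 / Real.sqrt ((p : ℝ) ^ 2 + c - 1)) * ((p : ℝ) * ζ p) := by ring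
  linarith
end
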